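/- arXiv:2012.08992 — 3 statements merged into one kernel-verified Lean document; each statement's English description precedes it below -/
import Mathlib

section
/- Let λ, b, c, m be positive real numbers with 0 < mλ - b < b/c. Set A = λ(2cm² + b) - mb(1 + 2c) and Δ₁ = A² + 4(b + cm²)·(b(1+c) - mcλ)·(mλ - b). Then Δ₁ > 0, and u* := (A + √Δ₁)/(2(b + cm²)) satisfies 0 < u* < λ and b - m(λ - u*) > 0. -/
set_option maxHeartbeats 1000000


theorem equilibrium_root_properties (lam b c m A Δ₁ uStar : ℝ)
    (hlam : 0 < lam) (hb : 0 < b) (hc : 0 < c) (hm : 0 < m)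
    (h1 : 0 < m * lam - b) (h2 : m * lam - b < b / c)
    (hA : A = lam * (2 * c * m ^ 2 + b) - m * b * (1 + 2 * c))
    (hΔ : Δ₁ = A ^ 2 + 4 * (b + c * m ^ 2) * (b * (1 + c) - m * c * lam) * (m * lam - b))
    (hu : uStar = (A + Real.sqrt Δ₁) / (2 * (b + c * m ^ 2))) :
    0 < Δ₁ ∧ 0 < uStar ∧ uStar < lam ∧ 0 < b - m * (lam - uStar) := by
  have hD : 0 < b + c * m ^ 2 := by positivity
  have hC : 0 < b * (1 + c) - m * c * lam := by
    have h2' : (m * lam - b) * c < b := (lt_div_iff₀ hc).mp h2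
    nlinarith
  have hΔpos : 0 < Δ₁ := by
    have hAsq : 0 ≤ A ^ 2 := sq_nonneg A
    nlinarith [mul_pos (mul_pos hD hC) h1]
  set s := Real.sqrt Δ₁ with hs_def
  have hs0 : 0 ≤ s := Real.sqrt_nonneg _
  have hs : s ^ 2 = Δ₁ := Real.sq_sqrt hΔpos.le
  -- s > -A
  have hsA : -A < s := by
    nlinarith [mul_pos (mul_pos hD hC) h1, sq_nonneg (s + A), sq_nonneg (s - A)]
  have hnum : 0 < A + s := by linarith
  have hmul : uStar * (2 * (b + c * m ^ 2)) = A + s := by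
    rw [hu]; field_simp
  have hupos : 0 < uStar := by nlinarith
  -- uStar < lam : need s < 2*D*lam - A, with (2D lam - A)^2 - Δ₁ = 4 D b^2 (1+c) > 0
  have hlt : s < 2 * (b + c * m ^ 2) * lam - A := by
    have hx : 0 < 2 * (b + c * m ^ 2) * lam - A := by
      have : 2 * (b + c * m ^ 2) * lam - A = lam * b + m * b * (1 + 2 * c) := by
        rw [hA]; ring
      rw [this]; positivity
    have hsq : Δ₁ < (2 * (b + c * m ^ 2) * lam - A) ^ 2 := by
      have : (2 * (b + c * m ^ 2) * lam - A) ^ 2 - Δ₁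
          = 4 * (b + c * m ^ 2) * (b ^ 2 * (1 + c)) := by
        rw [hΔ, hA]; ring
      nlinarith [mul_pos hD (mul_pos (mul_pos hb hb) (by linarith : (0:ℝ) < 1 + c))]
    nlinarith [sq_nonneg (s + (2 * (b + c * m ^ 2) * lam - A))]
  have hulam : uStar < lam := by nlinarith
  -- last: m * s > 2D(m lam - b) - m A
  have hkey : 2 * (b + c * m ^ 2) * (m * lam - b) - m * A < m * s := by
    set r := 2 * (b + c * m ^ 2) * (m * lam - b) - m * A with hr
    have hsqdiff : r ^ 2 < m ^ 2 * Δ₁ := by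
      have : m ^ 2 * Δ₁ - r ^ 2 = 4 * (b + c * m ^ 2) * (b ^ 2 * (m * lam - b)) := by
        rw [hr, hΔ, hA]; ring
      nlinarith [mul_pos hD (mul_pos (mul_pos hb hb) h1)]
    rcases lt_or_ge r 0 with h | h
    · have : 0 ≤ m * s := by positivity
      linarith
    · have hms : 0 ≤ m * s := by positivity
      have hms2 : (m * s) ^ 2 = m ^ 2 * Δ₁ := by rw [mul_pow, hs]
      nlinarith
  refine ⟨hΔpos, hupos, hulam, ?_⟩
  nlinarith
end

section
/- Let λ, b, c, m be positive real numbers with 0 < mλ - b < b/c. Set A = λ(2cm² + b) - mb(1 + 2c), Δ₁ = A² + 4(b + cm²)·(b(1+c) - mcλ)·(mλ - b), u* = (A + √Δ₁)/(2(b + cm²)), and v* = u*(λ - u*)/(b - m(λ - u*)). Then u* > 0, v* > 0, and the pair (u*, v*) solves the system λ - u* - b·v*/(u* + m·v*) = 0 and 1 - v* + c·u*/(u* + m·v*) = 0. -/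
/-! The value `u*` is the larger root of
`f x = (b + c m²) x² - A x - (b (1 + c) - m c λ) (m λ - b)`, and with `w = λ - x` one has
`f x = (b (1 + c) - c m w) (b - m w) - b x w`. Hence `f λ = b² (1 + c) > 0` and
`f (λ - b/m) = -b (λ - b/m) (b/m) < 0`, so `λ - b/m < u* < λ`; this makes `u*`, `λ - u*` and
`b - m (λ - u*)` positive, hence also `v*`. Since `v* = u* w / (b - m w)`, we get
`u* + m v* = b u* / (b - m w)`: the prey equation becomes an identity and the predator equation
becomes `f u* = 0`. -/

open Real

theorem four_mul_quadratic_eq_sq_sub_discrim (a b c x : ℝ) :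
    4 * a * (a * (x * x) + b * x + c) = (2 * a * x + b) ^ 2 - discrim a b c := by
  rw [discrim]; ring

section Quadratic

variable {a b c : ℝ}

theorem discrim_nonneg_of_quadratic_neg (ha : 0 < a) {p : ℝ}
    (hp : a * (p * p) + b * p + c < 0) : 0 ≤ discrim a b c := by
  nlinarith [four_mul_quadratic_eq_sq_sub_discrim a b c p, sq_nonneg (2 * a * p + b)]

theorem larger_root_mem_Ioo (ha : 0 < a) {p q : ℝ} (hpq : p < q)
    (hp : a * (p * p) + b * p + c < 0) (hq : 0 < a * (q * q) + b * q + c) :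
    (-b + √(discrim a b c)) / (2 * a) ∈ Set.Ioo p q := by
  set s := √(discrim a b c)
  have hs : s ^ 2 = discrim a b c := sq_sqrt (discrim_nonneg_of_quadratic_neg ha hp)
  have hp' : (2 * a * p + b) ^ 2 < s ^ 2 := by
    nlinarith [four_mul_quadratic_eq_sq_sub_discrim a b c p]
  have hq' : s ^ 2 < (2 * a * q + b) ^ 2 := by
    nlinarith [four_mul_quadratic_eq_sq_sub_discrim a b c q]
  obtain ⟨hp_lo, hp_hi⟩ := abs_lt.1 (abs_lt_of_sq_lt_sq hp' (sqrt_nonneg _))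
  have hq_hi : s < 2 * a * q + b := by
    by_contra! h
    have hapq := mul_lt_mul_of_pos_left hpq ha
    exact hq'.not_ge (sq_le_sq' (by linarith) h)
  constructor
  · rw [lt_div_iff₀ (by positivity)]; linarith
  · rw [div_lt_iff₀ (by positivity)]; linarith

end Quadratic

theorem ratio_dependent_equations_of_relation {b c m u v w : ℝ} (hu : u ≠ 0) (hb : b ≠ 0)
    (hd : b - m * w ≠ 0) (hrel : b * u * w = (b * (1 + c) - c * m * w) * (b - m * w))
    (hv : v = u * w / (b - m * w)) :
    w - b * v / (u + m * v) = 0 ∧ 1 - v + c * u / (u + m * v) = 0 := by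
  set d := b - m * w with hd_def
  have hsum : u + m * v = u * b / d := by
    rw [hv]; field_simp; rw [hd_def]; ring
  constructor
  · rw [hsum, hv]; field_simp; ring
  · rw [hsum, hv]; field_simp; linear_combination -hrel

theorem positive_equilibrium_solves_system_general (lam b c m A Δ₁ uStar vStar : ℝ)
    (hb : 0 < b) (hc : 0 < c) (hm : 0 < m)
    (h1 : 0 < m * lam - b)
    (hA : A = lam * (2 * c * m ^ 2 + b) - m * b * (1 + 2 * c))
    (hΔ : Δ₁ = A ^ 2 + 4 * (b + c * m ^ 2) * (b * (1 + c) - m * c * lam) * (m * lam - b))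
    (hu : uStar = (A + Real.sqrt Δ₁) / (2 * (b + c * m ^ 2)))
    (hv : vStar = uStar * (lam - uStar) / (b - m * (lam - uStar))) :
    0 < uStar ∧ 0 < vStar ∧
    lam - uStar - b * vStar / (uStar + m * vStar) = 0 ∧
    1 - vStar + c * uStar / (uStar + m * vStar) = 0 := by
  set a := b + c * m ^ 2
  set k := -((b * (1 + c) - m * c * lam) * (m * lam - b))
  have ha : 0 < a := by positivity
  have hf : ∀ x, a * (x * x) + -A * x + k
      = (b * (1 + c) - c * m * (lam - x)) * (b - m * (lam - x)) - b * x * (lam - x) := by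
    intro x; rw [hA]; ring
  have hdiscrim : discrim a (-A) k = Δ₁ := by rw [discrim, hΔ]; ring
  have hroot : uStar = (-(-A) + √(discrim a (-A) k)) / (2 * a) := by
    rw [hdiscrim, neg_neg, hu]
  set p := lam - b / m with hp_def
  have hp : 0 < p := by rw [sub_pos, div_lt_iff₀ hm]; linarith
  have hfp : a * (p * p) + -A * p + k < 0 := by
    have hd0 : b - m * (lam - p) = 0 := by rw [hp_def]; field_simp; ring
    rw [hf, hd0, mul_zero, zero_sub, neg_neg_iff_pos, hp_def, sub_sub_cancel]
    exact mul_pos (mul_pos hb hp) (div_pos hb hm)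
  have hflam : 0 < a * (lam * lam) + -A * lam + k := by
    rw [hf]; simp only [sub_self, mul_zero, sub_zero]; positivity
  obtain ⟨hu_lo, hu_hi⟩ : uStar ∈ Set.Ioo p lam :=
    hroot ▸ larger_root_mem_Ioo ha (by linarith [div_pos hb hm]) hfp hflam
  have hrel : b * uStar * (lam - uStar)
      = (b * (1 + c) - c * m * (lam - uStar)) * (b - m * (lam - uStar)) := by
    have hΔ0 := mul_self_sqrt (discrim_nonneg_of_quadratic_neg ha hfp)
    linarith [hf uStar, (quadratic_eq_zero_iff ha.ne' hΔ0.symm uStar).2 (Or.inl hroot)]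
  have hupos : 0 < uStar := hp.trans hu_lo
  have hd : 0 < b - m * (lam - uStar) := by
    have := (lt_div_iff₀ hm).1 (sub_lt_comm.1 hu_lo)
    linarith
  exact ⟨hupos, hv ▸ div_pos (mul_pos hupos (sub_pos.2 hu_hi)) hd,
    ratio_dependent_equations_of_relation hupos.ne' hb.ne' hd.ne' hrel hv⟩

theorem positive_equilibrium_solves_system (lam b c m A Δ₁ uStar vStar : ℝ)
    (hlam : 0 < lam) (hb : 0 < b) (hc : 0 < c) (hm : 0 < m)
    (h1 : 0 < m * lam - b) (h2 : m * lam - b < b / c)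
    (hA : A = lam * (2 * c * m ^ 2 + b) - m * b * (1 + 2 * c))
    (hΔ : Δ₁ = A ^ 2 + 4 * (b + c * m ^ 2) * (b * (1 + c) - m * c * lam) * (m * lam - b))
    (hu : uStar = (A + Real.sqrt Δ₁) / (2 * (b + c * m ^ 2)))
    (hv : vStar = uStar * (lam - uStar) / (b - m * (lam - uStar))) :
    0 < uStar ∧ 0 < vStar ∧
    lam - uStar - b * vStar / (uStar + m * vStar) = 0 ∧
    1 - vStar + c * uStar / (uStar + m * vStar) = 0 :=
  positive_equilibrium_solves_system_general lam b c m A Δ₁ uStar vStar hb hc hm h1 hA hΔ hu hv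
end

section
/- Let λ > 0, d > 0, ε > 0, K > 0 with d ≤ 2√λ + 1, and set c₂ = 2√λ. Define φ(t,x) = 1 + K·e^{(c₂ + ε/2)·t - x}. Then for all (t,x) with φ(t,x) ≥ 1 (which holds everywhere), φ satisfies ∂φ/∂t - d·∂²φ/∂x² ≥ φ·(1 - φ). -/
open Real

section ExponentialFront

variable (K c : ℝ)

theorem hasDerivAt_one_add_mul_exp_sub_time (x t : ℝ) :
    HasDerivAt (fun τ => 1 + K * exp (c * τ - x)) (c * (K * exp (c * t - x))) t := by
  have hlin : HasDerivAt (fun τ => c * τ - x) c t := by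
    simpa using ((hasDerivAt_id t).const_mul c).sub_const x
  exact ((hlin.exp.const_mul K).const_add 1).congr_deriv (by ring)

theorem deriv_one_add_mul_exp_sub_space (t : ℝ) :
    deriv (fun y => 1 + K * exp (c * t - y)) = fun y => -(K * exp (c * t - y)) := by
  funext y
  have hlin : HasDerivAt (fun y => c * t - y) (-1) y := by
    simpa using (hasDerivAt_id y).const_sub (c * t)
  exact (((hlin.exp.const_mul K).const_add 1).congr_deriv (by ring)).deriv

theorem deriv_deriv_one_add_mul_exp_sub_space (t x : ℝ) :
    deriv (deriv fun y => 1 + K * exp (c * t - y)) x = K * exp (c * t - x) := by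
  rw [deriv_one_add_mul_exp_sub_space]
  have hlin : HasDerivAt (fun y => c * t - y) (-1) x := by
    simpa using (hasDerivAt_id x).const_sub (c * t)
  exact ((hlin.exp.const_mul K).neg.congr_deriv (by ring)).deriv

end ExponentialFront

theorem mul_one_sub_le_mul_sub_one {a u : ℝ} (hu : 1 ≤ u) (ha : -1 ≤ a) :
    u * (1 - u) ≤ a * (u - 1) := by
  nlinarith

theorem predator_upper_supersolution_general (lam d ε K : ℝ)
    (hε : 0 < ε) (hK : 0 < K)
    (hdle : d ≤ 2 * Real.sqrt lam + 1)
    (φ : ℝ → ℝ → ℝ)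
    (hφ : φ = fun t x => 1 + K * Real.exp ((2 * Real.sqrt lam + ε / 2) * t - x)) :
    ∀ t x : ℝ, 1 ≤ φ t x ∧
      deriv (fun τ => φ τ x) t - d * deriv (deriv (fun y => φ t y)) x ≥
        φ t x * (1 - φ t x) := by
  intro t x
  set c := 2 * sqrt lam + ε / 2 with hc
  subst hφ
  have hφ_ge_one : 1 ≤ 1 + K * exp (c * t - x) := by
    have := mul_pos hK (exp_pos (c * t - x))
    linarith
  refine ⟨hφ_ge_one, ?_⟩
  have hPDE : deriv (fun τ => 1 + K * exp (c * τ - x)) t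
      - d * deriv (deriv fun y => 1 + K * exp (c * t - y)) x
      = (c - d) * ((1 + K * exp (c * t - x)) - 1) := by
    rw [(hasDerivAt_one_add_mul_exp_sub_time K c x t).deriv,
      deriv_deriv_one_add_mul_exp_sub_space]
    ring
  rw [ge_iff_le, hPDE]
  exact mul_one_sub_le_mul_sub_one hφ_ge_one (by rw [hc]; linarith)

theorem predator_upper_supersolution (lam d ε K : ℝ)
    (hlam : 0 < lam) (hd : 0 < d) (hε : 0 < ε) (hK : 0 < K)
    (hdle : d ≤ 2 * Real.sqrt lam + 1)
    (φ : ℝ → ℝ → ℝ)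
    (hφ : φ = fun t x => 1 + K * Real.exp ((2 * Real.sqrt lam + ε / 2) * t - x)) :
    ∀ t x : ℝ, 1 ≤ φ t x ∧
      deriv (fun τ => φ τ x) t - d * deriv (deriv (fun y => φ t y)) x ≥
        φ t x * (1 - φ t x) :=
  predator_upper_supersolution_general lam d ε K hε hK hdle φ hφ
end
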